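/- (Normalized-IGM invariance) Let A be a pairwise reciprocal matrix of size n ≥ 1 and let r ∈ ℝ, r ≠ 0, be such that Ḡ + r·J is invertible. Set v = (Ḡ + r·J)⁻¹.mulVec 1. Then ∑ᵢ v i ≠ 0 and (1/∑ᵢ v i) • v = w*, where w* = (1/c) • (G⁻¹.mulVec 1) with c = ∑ᵢ ∑ⱼ (G⁻¹) i j; i.e., the normalized solution does not depend on the choice of the nonzero shift r. -/

import Mathlib

open Matrix BigOperators

/-- A pairwise reciprocal matrix (PRM): all entries positive and `A i j * A j i = 1`. -/
def IsPRM {n : ℕ} (A : Matrix (Fin n) (Fin n) ℝ) : Prop :=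
  ∀ i j, 0 < A i j ∧ A i j * A j i = 1

/-- The matrix `Ḡ` with diagonal `(n-1) + ∑_{k ≠ i} (A k i)^2` and
off-diagonal `-(A i j + A j i)`. -/
noncomputable def Gbar {n : ℕ} (A : Matrix (Fin n) (Fin n) ℝ) :
    Matrix (Fin n) (Fin n) ℝ :=
  Matrix.of fun i j =>
    if i = j then ((n : ℝ) - 1) + ∑ k ∈ Finset.univ.filter (fun k => k ≠ i), (A k i) ^ 2
    else -(A i j + A j i)

/-- The all-ones matrix `J`. -/
noncomputable def Jmat (n : ℕ) : Matrix (Fin n) (Fin n) ℝ :=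
  Matrix.of fun _ _ => 1

/-- `G = Ḡ + J`. -/
noncomputable def Gmat {n : ℕ} (A : Matrix (Fin n) (Fin n) ℝ) :
    Matrix (Fin n) (Fin n) ℝ :=
  Gbar A + Jmat n

/-- The weighted least squares objective `f(w) = ∑ i ∑ j (w i - A i j * w j)^2`. -/
noncomputable def wls {n : ℕ} (A : Matrix (Fin n) (Fin n) ℝ) (w : Fin n → ℝ) : ℝ :=
  ∑ i, ∑ j, (w i - A i j * w j) ^ 2

/-! The quadratic form of `Ḡ` is the least-squares objective `wls A`, which for a positive `A`
vanishes only on vectors proportional to a column of `A`, hence never on a nonzero vector with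
zero sum. Adding `J = 𝟙𝟙ᵀ` contributes `(∑ x)²`, so `G` is positive definite and
`c = 𝟙ᵀ G⁻¹ 𝟙 > 0`. Since `J v = (∑ v) 𝟙`, the solution of `(Ḡ + r J) v = 𝟙` also solves
`G v = t 𝟙` for a scalar `t`, nonzero because `v ≠ 0`; so `v = t G⁻¹ 𝟙`, and normalization
removes `t`. -/

open Finset

lemma IsPRM.diag_eq_one {n : ℕ} {A : Matrix (Fin n) (Fin n) ℝ} (hA : IsPRM A) (i : Fin n) :
    A i i = 1 :=
  (mul_self_eq_one_iff.1 (hA i i).2).resolve_right (by linarith [(hA i i).1])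

lemma Gbar_eq_diagonal_sub {n : ℕ} {A : Matrix (Fin n) (Fin n) ℝ} (hdiag : ∀ i, A i i = 1) :
    Gbar A = diagonal (fun i => n + ∑ k, A k i ^ 2) - (A + Aᵀ) := by
  ext i j
  by_cases h : i = j
  · subst h
    simp [Gbar, hdiag, filter_ne', sum_erase_eq_sub]
    ring
  · simp [Gbar, h]

lemma wls_eq_sum_sub_two_dotProduct {n : ℕ} (A : Matrix (Fin n) (Fin n) ℝ) (x : Fin n → ℝ) :
    wls A x = ∑ i, (n + ∑ k, A k i ^ 2) * x i ^ 2 - 2 * (x ⬝ᵥ A *ᵥ x) := by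
  have hsq : ∀ i j, (x i - A i j * x j) ^ 2
      = x i ^ 2 + A i j ^ 2 * x j ^ 2 - 2 * (x i * (A i j * x j)) := fun i j => by ring
  simp only [wls, hsq, sum_sub_distrib, sum_add_distrib, ← mul_sum, dotProduct, mulVec]
  rw [sum_comm (f := fun i j => A i j ^ 2 * x j ^ 2)]
  simp [add_mul, sum_add_distrib, sum_mul]

lemma dotProduct_Gbar_mulVec {n : ℕ} {A : Matrix (Fin n) (Fin n) ℝ} (hdiag : ∀ i, A i i = 1)
    (x : Fin n → ℝ) : x ⬝ᵥ Gbar A *ᵥ x = wls A x := by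
  have htr : x ⬝ᵥ Aᵀ *ᵥ x = x ⬝ᵥ A *ᵥ x := by
    rw [dotProduct_mulVec, vecMul_transpose, dotProduct_comm]
  have hdiagonal : ∀ d : Fin n → ℝ, x ⬝ᵥ diagonal d *ᵥ x = ∑ i, d i * x i ^ 2 := fun d => by
    simp only [dotProduct, mulVec_diagonal]
    exact sum_congr rfl fun i _ => by ring
  rw [wls_eq_sum_sub_two_dotProduct, Gbar_eq_diagonal_sub hdiag, sub_mulVec, add_mulVec,
    dotProduct_sub, dotProduct_add, htr, hdiagonal, two_mul]

lemma Jmat_mulVec {n : ℕ} (x : Fin n → ℝ) : Jmat n *ᵥ x = fun _ => ∑ i, x i := by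
  ext i
  simp [Jmat, mulVec, dotProduct]

lemma dotProduct_Gmat_mulVec {n : ℕ} {A : Matrix (Fin n) (Fin n) ℝ} (hdiag : ∀ i, A i i = 1)
    (x : Fin n → ℝ) : x ⬝ᵥ Gmat A *ᵥ x = wls A x + (∑ i, x i) ^ 2 := by
  rw [Gmat, add_mulVec, dotProduct_add, dotProduct_Gbar_mulVec hdiag, Jmat_mulVec, sq]
  simp only [dotProduct, ← sum_mul]

lemma wls_nonneg {n : ℕ} (A : Matrix (Fin n) (Fin n) ℝ) (x : Fin n → ℝ) : 0 ≤ wls A x := by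
  unfold wls
  positivity

lemma eq_mul_of_wls_eq_zero {n : ℕ} {A : Matrix (Fin n) (Fin n) ℝ} {x : Fin n → ℝ}
    (h : wls A x = 0) (i j : Fin n) : x i = A i j * x j := by
  have hi := (sum_eq_zero_iff_of_nonneg fun i _ => by positivity).1 h i (mem_univ i)
  have hij := (sum_eq_zero_iff_of_nonneg fun j _ => by positivity).1 hi j (mem_univ j)
  exact sub_eq_zero.1 (pow_eq_zero_iff two_ne_zero |>.1 hij)

lemma eq_zero_of_wls_eq_zero {n : ℕ} {A : Matrix (Fin n) (Fin n) ℝ} (hpos : ∀ i j, 0 < A i j)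
    {x : Fin n → ℝ} (h : wls A x = 0) (hsum : ∑ i, x i = 0) : x = 0 := by
  funext j
  have hcol : (∑ i, A i j) * x j = 0 := by
    rw [sum_mul, ← hsum]
    exact sum_congr rfl fun i _ => (eq_mul_of_wls_eq_zero h i j).symm
  exact (mul_eq_zero.1 hcol).resolve_left (sum_pos (fun i _ => hpos i j) ⟨j, mem_univ j⟩).ne'

lemma Gmat_isHermitian {n : ℕ} (A : Matrix (Fin n) (Fin n) ℝ) : (Gmat A).IsHermitian := by
  ext i j
  by_cases h : i = j
  · subst h
    rfl
  · simp [Gmat, Gbar, Jmat, h, Ne.symm h, add_comm]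

lemma Gmat_posDef {n : ℕ} {A : Matrix (Fin n) (Fin n) ℝ} (hA : IsPRM A) : (Gmat A).PosDef := by
  refine PosDef.of_dotProduct_mulVec_pos (Gmat_isHermitian A) fun x hx => ?_
  rw [star_trivial, dotProduct_Gmat_mulVec hA.diag_eq_one]
  rcases eq_or_ne (∑ i, x i) 0 with hsum | hsum
  · rw [hsum, zero_pow two_ne_zero, add_zero]
    exact (wls_nonneg A x).lt_of_ne' fun h =>
      hx (eq_zero_of_wls_eq_zero (fun i j => (hA i j).1) h hsum)
  · exact add_pos_of_nonneg_of_pos (wls_nonneg A x) (by positivity)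

lemma Matrix.PosDef.sum_sum_pos {ι : Type*} [Fintype ι] [Nonempty ι] {M : Matrix ι ι ℝ}
    (hM : M.PosDef) : 0 < ∑ i, ∑ j, M i j := by
  simpa [dotProduct, mulVec] using hM.dotProduct_mulVec_pos (one_ne_zero (α := ι → ℝ))

lemma exists_smul_inv_mulVec_one_of_add_smul_Jmat {n : ℕ} [NeZero n]
    {G : Matrix (Fin n) (Fin n) ℝ} (hG : IsUnit G) {a : ℝ} (hM : IsUnit (G + a • Jmat n)) :
    ∃ t : ℝ, t ≠ 0 ∧ (G + a • Jmat n)⁻¹ *ᵥ 1 = t • G⁻¹ *ᵥ 1 := by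
  set v := (G + a • Jmat n)⁻¹ *ᵥ 1
  have hMv : (G + a • Jmat n) *ᵥ v = 1 := by
    rw [mulVec_mulVec, mul_nonsing_inv _ ((isUnit_iff_isUnit_det _).1 hM), one_mulVec]
  have hGv : G *ᵥ v = (1 - a * ∑ i, v i) • 1 := by
    rw [add_mulVec, smul_mulVec, Jmat_mulVec] at hMv
    ext i
    have := congrFun hMv i
    simp only [Pi.add_apply, Pi.smul_apply, smul_eq_mul, Pi.one_apply] at this ⊢
    linarith
  have hv : v = (1 - a * ∑ i, v i) • G⁻¹ *ᵥ 1 := by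
    rw [← mulVec_smul, ← hGv, mulVec_mulVec, nonsing_inv_mul _ ((isUnit_iff_isUnit_det _).1 hG),
      one_mulVec]
  refine ⟨_, fun ht => ?_, hv⟩
  rw [ht, zero_smul] at hv
  rw [hv, mulVec_zero] at hMv
  exact zero_ne_one hMv

lemma one_div_sum_smul_smul {ι : Type*} [Fintype ι] {t : ℝ} (ht : t ≠ 0) (w : ι → ℝ) :
    (1 / ∑ i, (t • w) i) • t • w = (1 / ∑ i, w i) • w := by
  simp only [Pi.smul_apply, smul_eq_mul, ← mul_sum, smul_smul]
  rw [one_div_mul_eq_div, div_mul_cancel_left₀ ht, one_div]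

theorem nigm_invariance_general {n : ℕ} (hn : 1 ≤ n)
    (A : Matrix (Fin n) (Fin n) ℝ) (hA : IsPRM A) (r : ℝ)
    (hinv : IsUnit (Gbar A + r • Jmat n)) :
    let v : Fin n → ℝ := (Gbar A + r • Jmat n)⁻¹.mulVec 1
    let c : ℝ := ∑ i, ∑ j, (Gmat A)⁻¹ i j
    (∑ i, v i) ≠ 0 ∧
    (1 / ∑ i, v i) • v = (1 / c) • ((Gmat A)⁻¹.mulVec 1) := by
  intro v c
  have : NeZero n := ⟨by omega⟩
  have hG := Gmat_posDef hA
  have hshift : Gbar A + r • Jmat n = Gmat A + (r - 1) • Jmat n := by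
    rw [Gmat, sub_smul, one_smul]
    abel
  obtain ⟨t, ht, hv⟩ := exists_smul_inv_mulVec_one_of_add_smul_Jmat hG.isUnit (hshift ▸ hinv)
  replace hv : v = t • (Gmat A)⁻¹ *ᵥ 1 := by rw [← hv, ← hshift]
  have hc : ∑ i, ((Gmat A)⁻¹ *ᵥ 1) i = c := by simp [c, mulVec, dotProduct]
  refine ⟨?_, ?_⟩
  · simp only [hv, Pi.smul_apply, smul_eq_mul, ← mul_sum, hc]
    exact mul_ne_zero ht hG.inv.sum_sum_pos.ne'
  · rw [hv, one_div_sum_smul_smul ht, hc]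

/-- Normalized-IGM invariance: for `r ≠ 0` with `Ḡ + r·J` invertible and
`v = (Ḡ + r·J)⁻¹.mulVec 1`, we have `∑ i, v i ≠ 0` and `(1/∑ i, v i) • v = w*`;
the normalized solution does not depend on the nonzero shift `r`. -/
theorem nigm_invariance {n : ℕ} (hn : 1 ≤ n)
    (A : Matrix (Fin n) (Fin n) ℝ) (hA : IsPRM A) (r : ℝ) (hr : r ≠ 0)
    (hinv : IsUnit (Gbar A + r • Jmat n)) :
    let v : Fin n → ℝ := (Gbar A + r • Jmat n)⁻¹.mulVec 1
    let c : ℝ := ∑ i, ∑ j, (Gmat A)⁻¹ i j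
    (∑ i, v i) ≠ 0 ∧
    (1 / ∑ i, v i) • v = (1 / c) • ((Gmat A)⁻¹.mulVec 1) :=
  nigm_invariance_general hn A hA r hinv
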